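/- arXiv:1610.05976 — 4 statements merged into one kernel-verified Lean document; each statement's English description precedes it below -/
import Mathlib

section
/- Let L ⊂ ℂ_∞ be a discrete 𝔽_q-subvector space. The exponential function e_L(X) = X·∏'_{λ∈L}(1 − X/λ) is 𝔽_q-linear: e_L(a·x + b·y) = a·e_L(x) + b·e_L(y) for all x, y ∈ ℂ_∞ and a, b ∈ 𝔽_q. -/
/-- `e` is the lattice exponential of the set `L ⊂ K`: for every `x`,
`e x = x · ∏'_{0 ≠ λ ∈ L} (1 - x/λ)`, the product converging unconditionally. -/
def IsLatticeExp {K : Type*} [NormedField K] (L : Set K) (e : K → K) : Prop :=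
  ∀ x : K, ∃ p : K,
    HasProd (fun l : {l : K // l ∈ L ∧ l ≠ 0} => 1 - x / (l : K)) p ∧ e x = x * p

/-!
For a finite `𝔽_q`-subspace `W`, the polynomial `P = ∏_{l ∈ W} (X - l)` is `𝔽_q`-linear:
`P(X + y) - P(X) - P(y)` has degree `< |W|` and vanishes on `W`, and `P(aX) = a^{|W|} P(X) = a P(X)`
because `|W|` is a power of `q`. The finite exponential `z ∏_{0 ≠ l ∈ W} (1 - z/l)` is a constant
multiple of `P`, hence linear too. The spans of finite subsets of `L` are finite and exhaust `L`, so
`e_L` is a pointwise limit of these linear maps.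
-/

open Polynomial Filter Finset Topology

section SubspacePolynomial

variable {R : Type*} [CommRing R] {S : Finset R}

lemma Finset.prod_add_sub_of_mem {W : AddSubgroup R} (hS : ∀ l, l ∈ S ↔ l ∈ W) {μ : R}
    (hμ : μ ∈ W) (z : R) : ∏ l ∈ S, (μ + z - l) = ∏ l ∈ S, (z - l) :=
  prod_nbij' (· - μ) (· + μ) (fun l hl => (hS _).2 (W.sub_mem ((hS l).1 hl) hμ))
    (fun l hl => (hS _).2 (W.add_mem ((hS l).1 hl) hμ)) (fun l _ => by simp)
    (fun l _ => by simp) (fun l _ => by ring)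

lemma Finset.prod_add_sub_eq_add [IsDomain R] {W : AddSubgroup R} (hS : ∀ l, l ∈ S ↔ l ∈ W)
    (x y : R) : ∏ l ∈ S, (x + y - l) = ∏ l ∈ S, (x - l) + ∏ l ∈ S, (y - l) := by
  set P : R[X] := ∏ l ∈ S, (X - C l)
  have hP : IsMonicOfDegree P #S :=
    ⟨natDegree_finsetProd_X_sub_C_eq_card S id, monic_prod_of_monic _ _ fun l _ => monic_X_sub_C l⟩
  have hPeval (z : R) : P.eval z = ∏ l ∈ S, (z - l) := by simp [P, eval_prod]
  have h0 : (0 : R) ∈ S := (hS 0).2 W.zero_mem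
  -- `P(X + y) - P(X) - P(y)` vanishes on `W`, as `P` is `W`-periodic with `P(μ) = 0` there.
  set g : R[X] := P.comp (X + C y) - P - C (P.eval y)
  have hg : g = 0 := by
    refine eq_zero_of_natDegree_lt_card_of_eval_eq_zero' g S (fun μ hμ => ?_) ?_
    · simp only [g, eval_sub, eval_comp, eval_add, eval_X, eval_C, hPeval,
        prod_add_sub_of_mem hS ((hS μ).1 hμ), prod_eq_zero hμ (sub_self μ), sub_zero, sub_self]
    · have hQ : IsMonicOfDegree (P.comp (X + C y)) #S := by
        simpa using hP.comp one_ne_zero (isMonicOfDegree_X_add_one y)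
      rw [natDegree_sub_C]
      exact hQ.natDegree_sub_lt (card_ne_zero_of_mem h0) hP
  have := congrArg (eval x) hg
  simp only [g, eval_sub, eval_comp, eval_add, eval_X, eval_C, eval_zero, hPeval] at this
  linear_combination this

lemma Finset.prod_smul_sub_eq_smul {Fq : Type*} [Field Fq] [Fintype Fq] [Algebra Fq R]
    {W : Submodule Fq R} (hS : ∀ l, l ∈ S ↔ l ∈ W) (a : Fq) (z : R) :
    ∏ l ∈ S, (a • z - l) = a • ∏ l ∈ S, (z - l) := by
  rcases eq_or_ne a 0 with rfl | ha
  · simp [prod_eq_zero ((hS 0).2 W.zero_mem)]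
  have hcard : #S = Nat.card W := by
    rw [← Nat.card_congr (Equiv.subtypeEquivRight hS), Nat.card_eq_fintype_card, Fintype.card_coe]
  have : Finite W := Nat.finite_of_card_ne_zero (hcard ▸ card_ne_zero_of_mem ((hS 0).2 W.zero_mem))
  have : Module.Finite Fq W := .of_finite
  calc ∏ l ∈ S, (a • z - l) = ∏ l ∈ S, a • (z - l) :=
        prod_nbij' (a⁻¹ • ·) (a • ·) (fun l hl => (hS _).2 (W.smul_mem _ ((hS l).1 hl)))
          (fun l hl => (hS _).2 (W.smul_mem _ ((hS l).1 hl))) (fun l _ => smul_inv_smul₀ ha l)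
          (fun l _ => inv_smul_smul₀ ha l) (fun l _ => by rw [smul_sub, smul_inv_smul₀ ha])
    _ = a ^ #S • ∏ l ∈ S, (z - l) := (smul_prod S a _).symm
    _ = a • ∏ l ∈ S, (z - l) := by
      rw [hcard, Module.natCard_eq_pow_finrank (K := Fq), Nat.card_eq_fintype_card,
        FiniteField.pow_card_pow]

end SubspacePolynomial

section FinsetExp

variable {K : Type*} [Field K]

/-- A factor with `l = 0` is `1 - z / 0 = 1`, so `S` may contain `0`. -/
def finsetExp (S : Finset K) (z : K) : K := z * ∏ l ∈ S, (1 - z / l)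

lemma exists_finsetExp_eq_mul_prod_sub {S : Finset K} (h0 : 0 ∈ S) :
    ∃ c : K, ∀ z, finsetExp S z = c * ∏ l ∈ S, (z - l) := by
  classical
  refine ⟨∏ l ∈ S.erase 0, (-l)⁻¹, fun z => ?_⟩
  rw [finsetExp, ← mul_prod_erase S _ h0, ← mul_prod_erase S _ h0, div_zero, sub_zero, sub_zero,
    one_mul, mul_left_comm, ← prod_mul_distrib]
  congr 1
  refine prod_congr rfl fun l hl => ?_
  have : l ≠ 0 := ne_of_mem_erase hl
  field_simp
  ring

lemma finsetExp_smul_add_smul {Fq : Type*} [Field Fq] [Fintype Fq] [Algebra Fq K]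
    {W : Submodule Fq K} {S : Finset K} (hS : ∀ l, l ∈ S ↔ l ∈ W) (a b : Fq) (x y : K) :
    finsetExp S (a • x + b • y) = a • finsetExp S x + b • finsetExp S y := by
  obtain ⟨c, hc⟩ := exists_finsetExp_eq_mul_prod_sub ((hS 0).2 W.zero_mem)
  simp only [hc, prod_add_sub_eq_add (W := W.toAddSubgroup) hS, prod_smul_sub_eq_smul hS, mul_add,
    mul_smul_comm]

end FinsetExp

section LatticeExp

variable {Fq K : Type*} [Field Fq] [Fintype Fq] [NormedField K] [Algebra Fq K]

variable (Fq) in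
noncomputable def spanFinset (s : Finset K) : Finset K :=
  have : Finite (Submodule.span Fq (s : Set K)) := Module.finite_of_finite Fq
  (Submodule.span Fq (s : Set K) : Set K).toFinite.toFinset

lemma mem_spanFinset {s : Finset K} {l : K} :
    l ∈ spanFinset Fq s ↔ l ∈ Submodule.span Fq (s : Set K) :=
  Set.Finite.mem_toFinset _

lemma IsLatticeExp.tendsto_finsetExp_spanFinset {L : Submodule Fq K} {e : K → K}
    (he : IsLatticeExp (L : Set K) e) (z : K) :
    Tendsto (fun s : Finset {l : K // l ∈ (L : Set K) ∧ l ≠ 0} =>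
      finsetExp (spanFinset Fq (s.map (Function.Embedding.subtype _))) z) atTop (𝓝 (e z)) := by
  classical
  obtain ⟨p, hp, hez⟩ := he z
  set T := fun s : Finset {l : K // l ∈ (L : Set K) ∧ l ≠ 0} =>
    spanFinset Fq (s.map (Function.Embedding.subtype _))
  have hTL (s) : ∀ l ∈ T s, l ∈ L := fun l hl =>
    Submodule.span_le.2 (by simpa [Set.subset_def] using fun l hl _ _ => hl) (mem_spanFinset.1 hl)
  have hΦ : Tendsto (fun s => (T s).subtype (fun l => l ∈ (L : Set K) ∧ l ≠ 0)) atTop atTop :=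
    tendsto_atTop_mono (fun s i hi => mem_subtype.2 (mem_spanFinset.2
      (Submodule.subset_span (mem_map_of_mem _ hi)))) tendsto_id
  rw [hez]
  refine ((hp.comp hΦ).const_mul z).congr fun s => ?_
  rw [Function.comp_apply, prod_subtype_eq_prod_filter (fun l => 1 - z / l), finsetExp]
  refine congrArg _ (prod_filter_of_ne fun l hl hne => ⟨hTL s l hl, ?_⟩)
  rintro rfl
  simp at hne

end LatticeExp

theorem stmt3_general (Fq K : Type*) [Field Fq] [Fintype Fq]
    [NormedField K] [Algebra Fq K]
    (L : Submodule Fq K)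
    (eL : K → K) (heL : IsLatticeExp (L : Set K) eL)
    (a b : Fq) (x y : K) :
    eL (a • x + b • y) = a • eL x + b • eL y := by
  refine tendsto_nhds_unique ((heL.tendsto_finsetExp_spanFinset _).congr fun s =>
    finsetExp_smul_add_smul (fun l => mem_spanFinset) a b x y) ?_
  simpa only [Algebra.smul_def] using ((heL.tendsto_finsetExp_spanFinset x).const_mul _).add
    ((heL.tendsto_finsetExp_spanFinset y).const_mul _)

/-- The lattice exponential of a discrete `𝔽_q`-subspace `L ⊂ ℂ_∞` is `𝔽_q`-linear:
`e_L(a·x + b·y) = a·e_L(x) + b·e_L(y)` for all `a, b ∈ 𝔽_q` and `x, y ∈ ℂ_∞`. -/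
theorem stmt3 (Fq K : Type*) [Field Fq] [Fintype Fq]
    [NormedField K] [IsUltrametricDist K] [CompleteSpace K] [Algebra Fq K]
    (L : Submodule Fq K)
    (hdisc : ∀ r : ℝ, {x : K | x ∈ L ∧ ‖x‖ ≤ r}.Finite)
    (eL : K → K) (heL : IsLatticeExp (L : Set K) eL)
    (a b : Fq) (x y : K) :
    eL (a • x + b • y) = a • eL x + b • eL y :=
  stmt3_general Fq K L eL heL a b x y
end

section
/- Let L ⊂ ℂ_∞ be a discrete 𝔽_q-subvector space. The zero set of the entire function e_L(X) = X·∏'_{λ∈L}(1 − X/λ) is exactly L, and every zero is simple. -/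
open Filter Topology Metric

section Ultrametric

variable {ι R : Type*} [NormedCommRing R] [NormOneClass R] [IsUltrametricDist R]

theorem norm_prod_sub_prod_le {s : Finset ι} {u v : ι → R} {δ : ℝ} (hδ : 0 ≤ δ)
    (hu : ∀ i ∈ s, ‖u i‖ ≤ 1) (hv : ∀ i ∈ s, ‖v i‖ ≤ 1) (huv : ∀ i ∈ s, ‖v i - u i‖ ≤ δ) :
    ‖∏ i ∈ s, v i - ∏ i ∈ s, u i‖ ≤ δ := by
  classical
  induction s using Finset.induction_on with
  | empty => simpa using hδ
  | insert a s ha ih =>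
    simp only [Finset.mem_insert, forall_eq_or_imp] at hu hv huv
    have hus : ‖∏ i ∈ s, u i‖ ≤ 1 :=
      (Finset.norm_prod_le _ _).trans (Finset.prod_le_one (fun _ _ => norm_nonneg _) hu.2)
    rw [Finset.prod_insert ha, Finset.prod_insert ha,
      show v a * ∏ i ∈ s, v i - u a * ∏ i ∈ s, u i
        = v a * (∏ i ∈ s, v i - ∏ i ∈ s, u i) + (v a - u a) * ∏ i ∈ s, u i by ring]
    refine (IsUltrametricDist.norm_add_le_max _ _).trans (max_le ?_ ?_)
    · exact (norm_mul_le _ _).trans <|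
        (mul_le_of_le_one_left (norm_nonneg _) hv.1).trans (ih hu.2 hv.2 huv.2)
    · exact (norm_mul_le _ _).trans <| (mul_le_of_le_one_right (norm_nonneg _) hus).trans huv.1

theorem HasProd.norm_sub_le {u v : ι → R} {a b : R} (ha : HasProd u a) (hb : HasProd v b)
    {δ : ℝ} (hδ : 0 ≤ δ) (hu : ∀ i, ‖u i‖ ≤ 1) (hv : ∀ i, ‖v i‖ ≤ 1)
    (huv : ∀ i, ‖v i - u i‖ ≤ δ) : ‖b - a‖ ≤ δ :=
  le_of_tendsto' (hb.sub ha).norm fun _ =>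
    norm_prod_sub_prod_le hδ (fun i _ => hu i) (fun i _ => hv i) (fun i _ => huv i)

theorem multipliable_of_norm_le_one [CompleteSpace R] {f : ι → R} (hf1 : ∀ i, ‖f i‖ ≤ 1)
    (hf : Tendsto f cofinite (𝓝 1)) : Multipliable f := by
  classical
  suffices CauchySeq fun s : Finset ι => ∏ i ∈ s, f i from
    (cauchySeq_tendsto_of_complete this).imp fun _ h => h
  rw [Metric.cauchySeq_iff']
  intro ε hε
  have hfar : {i | ¬ ‖f i - 1‖ < ε / 2}.Finite := by
    simpa [dist_eq_norm] using hf.eventually (ball_mem_nhds 1 (half_pos hε))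
  refine ⟨hfar.toFinset, fun m hm => ?_⟩
  have htail : ‖∏ i ∈ m \ hfar.toFinset, f i - ∏ i ∈ m \ hfar.toFinset, (1 : R)‖ ≤ ε / 2 :=
    norm_prod_sub_prod_le (half_pos hε).le (fun _ _ => norm_one.le) (fun i _ => hf1 i)
      fun i hi => (by simpa using (Finset.mem_sdiff.1 hi).2 : ‖f i - 1‖ < ε / 2).le
  rw [Finset.prod_const_one] at htail
  rw [dist_eq_norm, ← Finset.prod_sdiff hm, ← sub_one_mul]
  calc ‖(∏ i ∈ m \ hfar.toFinset, f i - 1) * ∏ i ∈ hfar.toFinset, f i‖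
      ≤ ‖∏ i ∈ m \ hfar.toFinset, f i - 1‖ := (norm_mul_le _ _).trans <|
        mul_le_of_le_one_right (norm_nonneg _) <| (Finset.norm_prod_le _ _).trans <|
          Finset.prod_le_one (fun _ _ => norm_nonneg _) fun i _ => hf1 i
    _ < ε := htail.trans_lt (half_lt_self hε)

end Ultrametric

section TailProduct

variable {ι K : Type*} [NormedField K] [IsUltrametricDist K] {c : ι → K} {r : ℝ}

theorem norm_one_sub_div_le_one {x y : K} (h : ‖x‖ ≤ ‖y‖) : ‖1 - x / y‖ ≤ 1 := by
  rw [sub_eq_add_neg]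
  refine (IsUltrametricDist.norm_add_le_max _ _).trans (max_le norm_one.le ?_)
  rw [norm_neg, norm_div]
  exact div_le_one_of_le₀ h (norm_nonneg _)

theorem tendsto_one_sub_div_cofinite (hc : ∀ t : ℝ, {i | ‖c i‖ ≤ t}.Finite) (y : K) :
    Tendsto (fun i => 1 - y / c i) cofinite (𝓝 1) := by
  have hcob : Tendsto c cofinite (Bornology.cobounded K) :=
    tendsto_norm_atTop_iff_cobounded.1 <| tendsto_atTop.2 fun t =>
      eventually_cofinite.2 <| (hc t).subset fun _ hi => (not_le.1 hi).le
  simpa [div_eq_mul_inv] using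
    tendsto_const_nhds.sub (tendsto_const_nhds.mul (Filter.tendsto_inv₀_cobounded.comp hcob))

variable [CompleteSpace K]

theorem multipliable_one_sub_div (hc : ∀ t : ℝ, {i | ‖c i‖ ≤ t}.Finite) (hr : ∀ i, r < ‖c i‖)
    {y : K} (hy : ‖y‖ ≤ r) : Multipliable fun i => 1 - y / c i :=
  multipliable_of_norm_le_one (fun i => norm_one_sub_div_le_one (hy.trans (hr i).le))
    (tendsto_one_sub_div_cofinite hc y)

theorem norm_tprod_one_sub_div_sub_le (hc : ∀ t : ℝ, {i | ‖c i‖ ≤ t}.Finite) (hr0 : 0 < r)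
    (hr : ∀ i, r < ‖c i‖) {y y' : K} (hy : ‖y‖ ≤ r) (hy' : ‖y'‖ ≤ r) :
    ‖∏' i, (1 - y' / c i) - ∏' i, (1 - y / c i)‖ ≤ ‖y' - y‖ / r := by
  refine (multipliable_one_sub_div hc hr hy).hasProd.norm_sub_le
    (multipliable_one_sub_div hc hr hy').hasProd (by positivity)
    (fun i => norm_one_sub_div_le_one (hy.trans (hr i).le))
    (fun i => norm_one_sub_div_le_one (hy'.trans (hr i).le)) fun i => ?_
  rw [show 1 - y' / c i - (1 - y / c i) = (y - y') / c i by ring, norm_div, norm_sub_rev]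
  exact div_le_div_of_nonneg_left (norm_nonneg _) hr0 (hr i).le

theorem continuousOn_tprod_one_sub_div (hc : ∀ t : ℝ, {i | ‖c i‖ ≤ t}.Finite) (hr0 : 0 < r)
    (hr : ∀ i, r < ‖c i‖) : ContinuousOn (fun y => ∏' i, (1 - y / c i)) (closedBall 0 r) := by
  refine (LipschitzOnWith.of_dist_le' (K := r⁻¹) fun y hy y' hy' => ?_).continuousOn
  rw [mem_closedBall_zero_iff] at hy hy'
  rw [dist_eq_norm, dist_eq_norm, ← div_eq_inv_mul]
  exact norm_tprod_one_sub_div_sub_le hc hr0 hr hy' hy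

theorem tprod_one_sub_div_ne_zero (hc : ∀ t : ℝ, {i | ‖c i‖ ≤ t}.Finite) (hr : ∀ i, r < ‖c i‖)
    {y : K} (hy : ‖y‖ < r) : ∏' i, (1 - y / c i) ≠ 0 := by
  have hr0 : 0 < r := (norm_nonneg y).trans_lt hy
  have hclose := norm_tprod_one_sub_div_sub_le hc hr0 hr (norm_zero.trans_le hr0.le) hy.le
  simp only [zero_div, sub_zero, tprod_one] at hclose
  intro h
  rw [h, zero_sub, norm_neg, norm_one] at hclose
  exact lt_irrefl 1 (hclose.trans_lt ((div_lt_one hr0).2 hy))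

end TailProduct

theorem exists_mul_prod_one_sub_div_eq_sub_mul {ι K : Type*} [Field K] [TopologicalSpace K]
    [IsTopologicalRing K] {c : ι → K} (hc : Function.Injective c) (s : Finset ι) {x : K}
    (hx : x = 0 ∨ ∃ i ∈ s, c i = x) :
    ∃ G : K → K, Continuous G ∧ G x ≠ 0 ∧ ∀ y, y * ∏ i ∈ s, (1 - y / c i) = (y - x) * G y := by
  classical
  rcases eq_or_ne x 0 with rfl | hx0
  · exact ⟨fun y => ∏ i ∈ s, (1 - y / c i), by fun_prop, by simp, fun y => by rw [sub_zero]⟩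
  obtain ⟨i₀, hi₀, rfl⟩ := hx.resolve_left hx0
  refine ⟨fun y => -(y / c i₀) * ∏ i ∈ s.erase i₀, (1 - y / c i), by fun_prop, ?_, fun y => ?_⟩
  · refine mul_ne_zero (by simp [hx0]) (Finset.prod_ne_zero_iff.2 fun i hi h => ?_)
    exact (Finset.mem_erase.1 hi).1 (hc (eq_of_div_eq_one (sub_eq_zero.1 h).symm).symm)
  · rw [← Finset.mul_prod_erase s _ hi₀, ← mul_assoc, ← mul_assoc]
    congr 1
    field_simp
    ring

theorem hasDerivAt_sub_smul_of_continuousAt {𝕜 F : Type*} [NontriviallyNormedField 𝕜]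
    [NormedAddCommGroup F] [NormedSpace 𝕜 F] {H : 𝕜 → F} {x : 𝕜} (hH : ContinuousAt H x) :
    HasDerivAt (fun y => (y - x) • H y) (H x) x := by
  rw [hasDerivAt_iff_tendsto_slope]
  refine (hH.tendsto.mono_left nhdsWithin_le_nhds).congr' ?_
  filter_upwards [self_mem_nhdsWithin] with y (hy : y ≠ x)
  rw [slope_def_module, sub_self, zero_smul, sub_zero, smul_smul,
    inv_mul_cancel₀ (sub_ne_zero.2 hy), one_smul]

section LatticeExp

variable {K : Type*} [NormedField K] {S : Set K}

theorem finite_norm_le_subtype (hS : ∀ r : ℝ, {x | x ∈ S ∧ ‖x‖ ≤ r}.Finite)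
    (r : ℝ) : {l : {l : K // l ∈ S ∧ l ≠ 0} | ‖(l : K)‖ ≤ r}.Finite :=
  ((hS r).preimage Subtype.val_injective.injOn).subset fun l hl => ⟨l.2.1, hl⟩

variable [IsUltrametricDist K] [CompleteSpace K] {e : K → K}

theorem IsLatticeExp.exists_local_factorization (hS : ∀ r : ℝ, {x | x ∈ S ∧ ‖x‖ ≤ r}.Finite)
    (he : IsLatticeExp S e) (x : K) :
    ∃ (s : Finset {l : K // l ∈ S ∧ l ≠ 0}) (Q : K → K),
      (∀ l : {l : K // l ∈ S ∧ l ≠ 0}, ‖(l : K)‖ ≤ ‖x‖ → l ∈ s) ∧ ContinuousAt Q x ∧ Q x ≠ 0 ∧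
      ∀ᶠ y in 𝓝 x, e y = y * (∏ l ∈ s, (1 - y / (l : K))) * Q y := by
  set r := ‖x‖ + 1
  have hfin := finite_norm_le_subtype hS r
  set s := hfin.toFinset
  have hr : ∀ l : ↥((s : Set {l : K // l ∈ S ∧ l ≠ 0})ᶜ), r < ‖((l : {l : K // l ∈ S ∧ l ≠ 0}) : K)‖ := fun l =>
    not_le.1 fun h => l.2 (hfin.mem_toFinset.2 h : (l : {l : K // l ∈ S ∧ l ≠ 0}) ∈ s)
  have hc : ∀ t : ℝ, {l : ↥((s : Set {l : K // l ∈ S ∧ l ≠ 0})ᶜ) | ‖((l : {l : K // l ∈ S ∧ l ≠ 0}) : K)‖ ≤ t}.Finite :=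
    fun t => (finite_norm_le_subtype hS t).preimage Subtype.val_injective.injOn
  have hxr : ‖x‖ < r := lt_add_one _
  refine ⟨s, fun y => ∏' l : ↥((s : Set {l : K // l ∈ S ∧ l ≠ 0})ᶜ), (1 - y / ((l : {l : K // l ∈ S ∧ l ≠ 0}) : K)),
    fun l hl => hfin.mem_toFinset.2 (hl.trans hxr.le), ?_, tprod_one_sub_div_ne_zero hc hr hxr, ?_⟩
  · exact (continuousOn_tprod_one_sub_div hc (by positivity) hr).continuousAt
      (closedBall_mem_nhds_of_mem (mem_ball_zero_iff.2 hxr))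
  · filter_upwards [closedBall_mem_nhds_of_mem (mem_ball_zero_iff.2 hxr)] with y hy
    obtain ⟨p, hp, hey⟩ := he y
    have hsplit := (s.hasProd fun l : {l : K // l ∈ S ∧ l ≠ 0} => 1 - y / (l : K)).mul_compl
      (multipliable_one_sub_div hc hr (mem_closedBall_zero_iff.1 hy)).hasProd
    rw [hey, hp.unique hsplit, mul_assoc]

theorem IsLatticeExp.eq_zero_iff (hS : ∀ r : ℝ, {x | x ∈ S ∧ ‖x‖ ≤ r}.Finite)
    (he : IsLatticeExp S e) {x : K} : e x = 0 ↔ x = 0 ∨ x ∈ S := by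
  obtain ⟨p, hp, hex⟩ := he x
  constructor
  · intro h0
    obtain ⟨s, Q, -, -, hQx, hfac⟩ := he.exists_local_factorization hS x
    rw [hfac.self_of_nhds, mul_eq_zero, mul_eq_zero, Finset.prod_eq_zero_iff] at h0
    rcases h0 with (h | ⟨l, -, hl⟩) | h
    · exact .inl h
    · exact .inr (eq_of_div_eq_one (sub_eq_zero.1 hl).symm ▸ l.2.1)
    · exact absurd h hQx
  · rcases eq_or_ne x 0 with rfl | hx0
    · exact fun _ => by rw [hex, zero_mul]
    · refine fun hxS => ?_
      rw [hex, hp.unique (hasProd_zero_of_exists_eq_zero ⟨⟨x, hxS.resolve_left hx0, hx0⟩, ?_⟩),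
        mul_zero]
      simp [hx0]

end LatticeExp

theorem IsLatticeExp.exists_hasDerivAt_ne_zero {K : Type*} [NontriviallyNormedField K]
    [IsUltrametricDist K] [CompleteSpace K] {S : Set K} {e : K → K}
    (hS : ∀ r : ℝ, {x | x ∈ S ∧ ‖x‖ ≤ r}.Finite) (he : IsLatticeExp S e) {x : K}
    (hx : x = 0 ∨ x ∈ S) : ∃ d : K, d ≠ 0 ∧ HasDerivAt e d x := by
  obtain ⟨s, Q, hs, hQ, hQx, hfac⟩ := he.exists_local_factorization hS x
  have hroot : x = 0 ∨ ∃ l ∈ s, (l : K) = x := by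
    rcases eq_or_ne x 0 with h0 | h0
    · exact .inl h0
    · exact .inr ⟨⟨x, hx.resolve_left h0, h0⟩, hs _ le_rfl, rfl⟩
  obtain ⟨G, hG, hGx, hPG⟩ := exists_mul_prod_one_sub_div_eq_sub_mul Subtype.val_injective s hroot
  refine ⟨G x * Q x, mul_ne_zero hGx hQx, ?_⟩
  refine (hasDerivAt_sub_smul_of_continuousAt (hG.continuousAt.mul hQ)).congr_of_eventuallyEq ?_
  filter_upwards [hfac] with y hy
  rw [hy, hPG, smul_eq_mul, mul_assoc]
  rfl

theorem stmt4_general (Fq K : Type*) [Field Fq]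
    [NontriviallyNormedField K] [IsUltrametricDist K] [CompleteSpace K] [Algebra Fq K]
    (L : Submodule Fq K)
    (hdisc : ∀ r : ℝ, {x : K | x ∈ L ∧ ‖x‖ ≤ r}.Finite)
    (eL : K → K) (heL : IsLatticeExp (L : Set K) eL) :
    {x : K | eL x = 0} = (L : Set K) ∧
    ∀ l ∈ L, ∃ d : K, d ≠ 0 ∧ HasDerivAt eL d l :=
  ⟨Set.ext fun _ => (heL.eq_zero_iff hdisc).trans (or_iff_right_of_imp fun h => h ▸ L.zero_mem),
    fun _ hl => heL.exists_hasDerivAt_ne_zero hdisc (.inr hl)⟩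

/-- The zero set of the lattice exponential `e_L` of a discrete `𝔽_q`-subspace
`L ⊂ ℂ_∞` is exactly `L`, and every zero is simple (the derivative of `e_L` at each
point of `L` is nonzero). -/
theorem stmt4 (Fq K : Type*) [Field Fq] [Fintype Fq]
    [NontriviallyNormedField K] [IsUltrametricDist K] [CompleteSpace K] [Algebra Fq K]
    (L : Submodule Fq K)
    (hdisc : ∀ r : ℝ, {x : K | x ∈ L ∧ ‖x‖ ≤ r}.Finite)
    (eL : K → K) (heL : IsLatticeExp (L : Set K) eL) :
    {x : K | eL x = 0} = (L : Set K) ∧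
    ∀ l ∈ L, ∃ d : K, d ≠ 0 ∧ HasDerivAt eL d l :=
  stmt4_general Fq K L hdisc eL heL
end

section
/- Let L be a discrete A-module in ℂ_∞ of rank r (i.e. L is a free A-module of rank r that is discrete in ℂ_∞), and for nonzero a ∈ A define φ_a(Z) = a·Z·∏'_{λ ∈ a^{-1}L/L} (1 − Z/e_L(λ)). Then φ_a is a polynomial of degree q^(r·deg a) in Z. -/
/-!
Multiplication by `a` identifies `a⁻¹L/L` with `L/aL`, and a basis of `L` identifies `L/aL` with
`(A/a)^r`, which has `q^(r·deg a)` elements. The finite set `R` of nonzero cosets therefore has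
`q^(r·deg a) - 1` elements, and `e_L` does not vanish on it because `e_L` vanishes exactly on `L`.
So `φ_a` is `a·Z` times `q^(r·deg a) - 1` linear factors.
-/

open Polynomial

theorem Nat.card_subtype_ne_add_one {W : Type*} [Finite W] (w₀ : W) :
    Nat.card {w : W // w ≠ w₀} + 1 = Nat.card W := by
  classical
  have := Fintype.ofFinite W
  rw [Nat.card_eq_fintype_card, Nat.card_eq_fintype_card, Fintype.card_subtype_compl,
    Fintype.card_subtype_eq]
  have := Fintype.card_pos_iff.mpr ⟨w₀⟩
  omega

theorem Polynomial.natCard_quotient_span_singleton {F : Type*} [Field F] [Finite F] {a : F[X]}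
    (ha : a ≠ 0) : Nat.card (F[X] ⧸ Ideal.span {a}) = Nat.card F ^ a.natDegree := by
  let pb := AdjoinRoot.powerBasis ha
  have := pb.finite
  rw [show Nat.card (F[X] ⧸ Ideal.span {a}) = Nat.card (AdjoinRoot a) from rfl,
    Module.natCard_eq_pow_finrank (K := F), pb.finrank, AdjoinRoot.powerBasis_dim]

theorem Polynomial.natDegree_C_mul_X_mul_prod_one_sub_C_mul_X {R ι : Type*} [CommRing R]
    [IsDomain R] {c : R} (hc : c ≠ 0) (s : Finset ι) {b : ι → R} (hb : ∀ i ∈ s, b i ≠ 0) :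
    (C c * X * ∏ i ∈ s, (1 - C (b i) * X)).natDegree = s.card + 1 := by
  have hfac : ∀ i ∈ s, (1 - C (b i) * X).natDegree = 1 := fun i hi => by
    rw [natDegree_sub_eq_right_of_natDegree_lt] <;> simp [natDegree_C_mul_X _ (hb i hi)]
  have hne : ∀ i ∈ s, (1 - C (b i) * X) ≠ 0 := fun i hi h => by simpa [h] using hfac i hi
  rw [natDegree_mul (by simp [hc, X_ne_zero]) (Finset.prod_ne_zero_iff.mpr hne),
    natDegree_C_mul_X _ hc, natDegree_prod _ _ hne, Finset.sum_congr rfl hfac]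
  simp [add_comm]

section ReduceCoordsMod

variable {A M ι : Type*} [CommRing A] [AddCommGroup M] [Module A M]

def reduceCoordsMod (f : M ≃ₗ[A] (ι → A)) (a : A) : M →+ (ι → A ⧸ Ideal.span {a}) :=
  ((Ideal.Quotient.mk _).toAddMonoidHom.compLeft ι).comp f.toAddMonoidHom

theorem reduceCoordsMod_surjective (f : M ≃ₗ[A] (ι → A)) (a : A) :
    Function.Surjective (reduceCoordsMod f a) := by
  intro w
  choose v hv using fun i => Ideal.Quotient.mk_surjective (w i)
  exact ⟨f.symm v, funext fun i => by simp [reduceCoordsMod, hv]⟩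

theorem reduceCoordsMod_eq_zero_iff (f : M ≃ₗ[A] (ι → A)) (a : A) (x : M) :
    reduceCoordsMod f a x = 0 ↔ ∃ y, x = a • y := by
  have hdvd : reduceCoordsMod f a x = 0 ↔ ∀ i, a ∣ f x i := by
    simp [reduceCoordsMod, funext_iff, Ideal.Quotient.eq_zero_iff_dvd]
  rw [hdvd]
  constructor
  · intro h
    choose c hc using h
    exact ⟨f.symm c, f.injective (by simpa [funext_iff] using hc)⟩
  · rintro ⟨y, rfl⟩ i
    simp

end ReduceCoordsMod

theorem algebraMap_ne_zero_of_linearEquiv_pi {A K ι : Type*} [CommRing A] [Semiring K]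
    [Algebra A K] [Nonempty ι] {L : Submodule A K} (f : L ≃ₗ[A] (ι → A)) {a : A} (ha : a ≠ 0) :
    algebraMap A K a ≠ 0 := by
  intro h
  let v : L := f.symm fun _ => 1
  have hav : a • v = 0 := Subtype.ext (by simp [Algebra.smul_def, h])
  have := congrFun (congrArg f hav) (Classical.arbitrary ι)
  simp [v, ha] at this

/-- The map `ρ ↦ φ(a • ρ)` is a bijection from `R` onto `W \ {0}`. -/
theorem card_representatives_add_one {A K W : Type*} [CommRing A] [Field K] [Algebra A K]
    [AddCommGroup W] [Finite W] {L : Submodule A K} {a : A} (ha : algebraMap A K a ≠ 0)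
    {φ : L →+ W} (hφ : Function.Surjective φ) (hker : ∀ x, φ x = 0 ↔ ∃ y : L, x = a • y)
    {R : Finset K} (hR1 : ∀ ρ ∈ R, a • ρ ∈ L ∧ ρ ∉ L)
    (hR2 : ∀ x : K, a • x ∈ L → x ∉ L → ∃! ρ, ρ ∈ R ∧ x - ρ ∈ L) :
    R.card + 1 = Nat.card W := by
  have hcancel : ∀ x y : K, a • x = a • y → x = y := fun x y h => by
    rw [Algebra.smul_def, Algebra.smul_def] at h
    exact mul_left_cancel₀ ha h
  let F : R → {w : W // w ≠ 0} := fun ρ => ⟨φ ⟨a • ρ, (hR1 ρ ρ.2).1⟩, fun h0 => by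
    obtain ⟨y, hy⟩ := (hker _).mp h0
    exact (hR1 ρ ρ.2).2 (hcancel _ _ (congrArg Subtype.val hy) ▸ y.2)⟩
  have hFinj : Function.Injective F := by
    rintro ⟨ρ₁, h₁⟩ ⟨ρ₂, h₂⟩ h
    obtain ⟨y, hy⟩ := (hker (⟨a • ρ₁, (hR1 ρ₁ h₁).1⟩ - ⟨a • ρ₂, (hR1 ρ₂ h₂).1⟩)).mp
      (by rw [map_sub, sub_eq_zero]; exact congrArg Subtype.val h)
    have hsub : ρ₁ - ρ₂ ∈ L := by
      rw [hcancel (ρ₁ - ρ₂) y (by simpa [smul_sub] using congrArg Subtype.val hy)]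
      exact y.2
    obtain ⟨ρ, _, huniq⟩ := hR2 ρ₁ (hR1 ρ₁ h₁).1 (hR1 ρ₁ h₁).2
    exact Subtype.ext ((huniq ρ₁ ⟨h₁, by simp⟩).trans (huniq ρ₂ ⟨h₂, hsub⟩).symm)
  have hFsurj : Function.Surjective F := by
    rintro ⟨w, hw⟩
    obtain ⟨z, rfl⟩ := hφ w
    set x := (algebraMap A K a)⁻¹ * z
    have hax : a • x = z := by
      rw [Algebra.smul_def, ← mul_assoc, mul_inv_cancel₀ ha, one_mul]
    have hxL : x ∉ L := fun hxL => hw ((hker z).mpr ⟨⟨x, hxL⟩, Subtype.ext hax.symm⟩)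
    obtain ⟨ρ, ⟨hρR, hρL⟩, _⟩ := hR2 x (hax ▸ z.2) hxL
    refine ⟨⟨ρ, hρR⟩, Subtype.ext ?_⟩
    have hdecomp : (⟨a • ρ, (hR1 ρ hρR).1⟩ : L) = z - a • ⟨x - ρ, hρL⟩ :=
      Subtype.ext (by simp [smul_sub, hax])
    simp only [F, hdecomp, map_sub, (hker _).mpr ⟨_, rfl⟩, sub_zero]
  rw [← Nat.card_subtype_ne_add_one 0, ← Nat.card_congr (Equiv.ofBijective F ⟨hFinj, hFsurj⟩),
    Nat.card_eq_finsetCard]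

theorem stmt6_general (Fq K : Type*) [Field Fq] [Fintype Fq] (q : ℕ) (hq : q = Fintype.card Fq)
    [NormedField K]
    [Algebra (Polynomial Fq) K]
    (L : Submodule (Polynomial Fq) K) (r : ℕ) (hr : 1 ≤ r)
    (hfree : Nonempty (L ≃ₗ[Polynomial Fq] (Fin r → Polynomial Fq)))
    (eL : K → K)
    (hzero : ∀ x : K, eL x = 0 ↔ x ∈ L)
    (a : Polynomial Fq) (ha : a ≠ 0)
    (R : Finset K)
    (hR1 : ∀ ρ ∈ R, a • ρ ∈ L ∧ ρ ∉ L)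
    (hR2 : ∀ x : K, a • x ∈ L → x ∉ L → ∃! ρ, ρ ∈ R ∧ x - ρ ∈ L) :
    (Polynomial.C (algebraMap (Polynomial Fq) K a) * Polynomial.X *
        ∏ ρ ∈ R, (1 - Polynomial.C (eL ρ)⁻¹ * Polynomial.X)).natDegree
      = q ^ (r * a.natDegree) := by
  obtain ⟨f⟩ := hfree
  have : Nonempty (Fin r) := ⟨⟨0, hr⟩⟩
  have hquot := Polynomial.natCard_quotient_span_singleton ha
  have : Finite (Fq[X] ⧸ Ideal.span {a}) :=
    Nat.finite_of_card_ne_zero (by rw [hquot]; exact pow_ne_zero _ Nat.card_pos.ne')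
  have haK := algebraMap_ne_zero_of_linearEquiv_pi f ha
  have hcard : R.card + 1 = q ^ (r * a.natDegree) := by
    rw [card_representatives_add_one haK (reduceCoordsMod_surjective f a)
      (reduceCoordsMod_eq_zero_iff f a) hR1 hR2, Nat.card_pi, hquot, Finset.prod_const,
      Finset.card_univ, Fintype.card_fin, hq, Nat.card_eq_fintype_card, ← pow_mul, mul_comm]
  have hinv : ∀ ρ ∈ R, (eL ρ)⁻¹ ≠ 0 := fun ρ hρ =>
    inv_ne_zero ((hzero ρ).not.mpr (hR1 ρ hρ).2)
  rw [natDegree_C_mul_X_mul_prod_one_sub_C_mul_X haK R hinv, hcard]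

/-- If `L ⊂ ℂ_∞` is a discrete free `A`-module of rank `r` (`A = 𝔽_q[t]`) and
`a ∈ A` is nonzero, then `φ_a(Z) = a·Z·∏'_{λ ∈ a⁻¹L/L}(1 - Z/e_L(λ))` is a
polynomial of degree `q^(r·deg a)` in `Z`.  Here `R` is a set of representatives
of the nonzero cosets of `a⁻¹L/L`. -/
theorem stmt6 (Fq K : Type*) [Field Fq] [Fintype Fq] (q : ℕ) (hq : q = Fintype.card Fq)
    [NormedField K] [IsUltrametricDist K] [CompleteSpace K]
    [Algebra (Polynomial Fq) K]
    (L : Submodule (Polynomial Fq) K) (r : ℕ) (hr : 1 ≤ r)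
    (hfree : Nonempty (L ≃ₗ[Polynomial Fq] (Fin r → Polynomial Fq)))
    (hdisc : ∀ ρ : ℝ, {x : K | x ∈ L ∧ ‖x‖ ≤ ρ}.Finite)
    (eL : K → K) (heL : IsLatticeExp (L : Set K) eL)
    (hzero : ∀ x : K, eL x = 0 ↔ x ∈ L)
    (a : Polynomial Fq) (ha : a ≠ 0)
    (R : Finset K)
    (hR1 : ∀ ρ ∈ R, a • ρ ∈ L ∧ ρ ∉ L)
    (hR2 : ∀ x : K, a • x ∈ L → x ∉ L → ∃! ρ, ρ ∈ R ∧ x - ρ ∈ L) :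
    (Polynomial.C (algebraMap (Polynomial Fq) K a) * Polynomial.X *
        ∏ ρ ∈ R, (1 - Polynomial.C (eL ρ)⁻¹ * Polynomial.X)).natDegree
      = q ^ (r * a.natDegree) :=
  stmt6_general Fq K q hq L r hr hfree eL hzero a ha R hR1 hR2
end

section
/- For a discrete rank-r A-lattice L in ℂ_∞, the polynomial φ_a(Z) = a·Z·∏'_{λ∈a^{-1}L/L}(1 − Z/e_L(λ)) satisfies the functional equation e_L(a·x) = φ_a(e_L(x)) for all x ∈ ℂ_∞. -/
open Polynomial in
/-- Both sides are polynomials in `x` of degree `#s` with the same leading term, and they agree on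
`s` because `s` is invariant under translation by its own elements. -/
theorem Finset.prod_add_sub_of_sub_mem {K : Type*} [Field K] {s : Finset K} (h0 : 0 ∈ s)
    (hsub : ∀ a ∈ s, ∀ b ∈ s, a - b ∈ s) (x y : K) :
    ∏ v ∈ s, (x + y - v) = ∏ v ∈ s, (x - v) + ∏ v ∈ s, (y - v) := by
  set P : K[X] := ∏ v ∈ s, (X - C v)
  set Q : K[X] := ∏ v ∈ s, (X - C (v - y))
  have hP : ∀ z, P.eval z = ∏ v ∈ s, (z - v) := fun z => by simp [P, eval_prod]
  have hQ : ∀ z, Q.eval z = ∏ v ∈ s, (z + y - v) := fun z => by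
    simp only [Q, eval_prod, eval_sub, eval_X, eval_C]
    exact Finset.prod_congr rfl fun v _ => by ring
  have hPQ : (Q - P).degree < s.card := by
    have hQm : Q.Monic := monic_prod_of_monic _ _ fun v _ => monic_X_sub_C _
    have hPm : P.Monic := monic_prod_of_monic _ _ fun v _ => monic_X_sub_C _
    have hQd : Q.degree = s.card := by
      rw [degree_eq_natDegree hQm.ne_zero, natDegree_finsetProd_X_sub_C_eq_card]
    have hPd : P.degree = s.card := by
      rw [degree_eq_natDegree hPm.ne_zero, natDegree_finsetProd_X_sub_C_eq_card]
    simpa [hQd] using degree_sub_lt_left (hQd.trans hPd.symm) hQm.ne_zero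
      (hQm.leadingCoeff.trans hPm.leadingCoeff.symm)
  have hcard : (0 : WithBot ℕ) < s.card := by exact_mod_cast Finset.card_pos.mpr ⟨0, h0⟩
  have key : Q = P + C (P.eval y) := by
    refine eq_of_degree_sub_lt_of_eval_finset_eq s ?_ fun w hw => ?_
    · rw [← sub_sub]
      exact (degree_sub_le _ _).trans_lt (max_lt hPQ (degree_C_le.trans_lt hcard))
    · rw [eval_add, eval_C, hQ, hP, hP, Finset.prod_eq_zero hw (sub_self w), zero_add]
      refine Finset.prod_nbij' (· - w) (· + w) (fun v hv => hsub v hv w hw)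
        (fun u hu => by simpa using hsub u hu (0 - w) (hsub 0 h0 w hw)) (fun v _ => by ring)
        (fun u _ => by ring) (fun v _ => by ring)
  simpa only [eval_add, eval_C, hP, hQ] using congrArg (eval x) key

theorem Finset.mul_prod_erase_one_sub_div_add {K : Type*} [Field K] [DecidableEq K]
    {s : Finset K} (h0 : 0 ∈ s) (hsub : ∀ a ∈ s, ∀ b ∈ s, a - b ∈ s) (x y : K) :
    (x + y) * ∏ v ∈ s.erase 0, (1 - (x + y) / v) =
      x * ∏ v ∈ s.erase 0, (1 - x / v) + y * ∏ v ∈ s.erase 0, (1 - y / v) := by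
  have hscale : ∀ z, z * ∏ v ∈ s.erase 0, (1 - z / v) =
      (∏ v ∈ s.erase 0, (-v)⁻¹) * ∏ v ∈ s, (z - v) := fun z => by
    rw [← Finset.mul_prod_erase s _ h0, sub_zero, mul_left_comm, ← Finset.prod_mul_distrib]
    congr 1
    refine Finset.prod_congr rfl fun v hv => ?_
    have : v ≠ 0 := Finset.ne_of_mem_erase hv
    field_simp
    ring
  rw [hscale, hscale, hscale, s.prod_add_sub_of_sub_mem h0 hsub, mul_add]

open Filter Topology

theorem IsLatticeExp.map_zero {K : Type*} [NormedField K] {L : Set K} {e : K → K}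
    (he : IsLatticeExp L e) : e 0 = 0 := by
  obtain ⟨p, -, hp⟩ := he 0
  rw [hp, zero_mul]

theorem IsLatticeExp.map_add {K : Type*} [NormedField K] [IsUltrametricDist K] {L : AddSubgroup K}
    (hdisc : ∀ ρ : ℝ, {x : K | x ∈ L ∧ ‖x‖ ≤ ρ}.Finite) {e : K → K}
    (he : IsLatticeExp (L : Set K) e) (x y : K) : e (x + y) = e x + e y := by
  classical
  let W : ℕ → Finset K := fun n => (hdisc n).toFinset
  have hW : ∀ n v, v ∈ W n ↔ v ∈ L ∧ ‖v‖ ≤ n := fun n v => (hdisc n).mem_toFinset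
  have hW0 : ∀ n, (0 : K) ∈ W n := fun n => (hW n 0).2 ⟨L.zero_mem, by simp⟩
  have hWsub : ∀ n, ∀ a ∈ W n, ∀ b ∈ W n, a - b ∈ W n := by
    intro n a ha b hb
    rw [hW] at ha hb ⊢
    refine ⟨L.sub_mem ha.1 hb.1, ?_⟩
    calc ‖a - b‖ ≤ max ‖a‖ ‖-b‖ := sub_eq_add_neg a b ▸ IsUltrametricDist.norm_add_le_max a (-b)
      _ ≤ n := by rw [norm_neg]; exact max_le ha.2 hb.2
  let V : ℕ → Finset {l : K // l ∈ L ∧ l ≠ 0} := fun n => ((W n).erase 0).subtype _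
  have hV : Tendsto V atTop atTop := by
    refine tendsto_atTop_finset_of_monotone (fun m n hmn => ?_) fun l => ?_
    · refine Finset.subtype_mono (Finset.erase_subset_erase _ fun v hv => ?_)
      rw [hW] at hv ⊢
      exact ⟨hv.1, hv.2.trans (by exact_mod_cast hmn)⟩
    · obtain ⟨n, hn⟩ := exists_nat_ge ‖(l : K)‖
      exact ⟨n, Finset.mem_subtype.2 (Finset.mem_erase.2 ⟨l.2.2, (hW n l).2 ⟨l.2.1, hn⟩⟩)⟩
  have hlim : ∀ z, Tendsto (fun n => z * ∏ v ∈ (W n).erase 0, (1 - z / v)) atTop (𝓝 (e z)) := by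
    intro z
    obtain ⟨p, hp, hez⟩ := he z
    refine hez ▸ ((hp.comp hV).const_mul z).congr fun n => ?_
    have hfilter : ((W n).erase 0).filter (fun l => l ∈ L ∧ l ≠ 0) = (W n).erase 0 :=
      Finset.filter_true_of_mem fun v hv =>
        ⟨((hW n v).1 (Finset.mem_of_mem_erase hv)).1, Finset.ne_of_mem_erase hv⟩
    rw [Function.comp_apply, ← hfilter, ← Finset.subtype_map, Finset.prod_map]
    rfl
  refine tendsto_nhds_unique (hlim (x + y)) (((hlim x).add (hlim y)).congr fun n => ?_)
  exact ((W n).mul_prod_erase_one_sub_div_add (hW0 n) (hWsub n) x y).symm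

theorem hasProd_one_sub_div_of_smul_mem {A K : Type*} [CommRing A] [Field K] [Algebra A K]
    [TopologicalSpace K] {L : Set K} {a : A} (ha : algebraMap A K a ≠ 0) {x p : K}
    (h : HasProd (fun l : {l : K // l ∈ L ∧ l ≠ 0} => 1 - a • x / l) p) :
    HasProd (fun μ : {μ : K // a • μ ∈ L ∧ μ ≠ 0} => 1 - x / μ) p := by
  let scale : {μ : K // a • μ ∈ L ∧ μ ≠ 0} ≃ {l : K // l ∈ L ∧ l ≠ 0} :=
    (Equiv.mulLeft₀ _ ha).subtypeEquiv fun μ => by simp [Algebra.smul_def, ha]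
  refine (scale.hasProd_iff.2 h).congr_fun fun μ => ?_
  simp [scale, Algebra.smul_def, mul_div_mul_left _ _ ha]

theorem IsLatticeExp.hasProd_coset {K : Type*} [NormedField K] {L : AddSubgroup K} {e : K → K}
    (he : IsLatticeExp (L : Set K) e) {ρ : K} (hρ : ρ ∉ L) (heρ : e ρ ≠ 0) (x : K) :
    HasProd (fun μ : {μ : K // μ - ρ ∈ L} => 1 - x / μ) (e (ρ - x) / e ρ) := by
  obtain ⟨p, hp, hep⟩ := he ρ
  obtain ⟨p', hp', hep'⟩ := he (ρ - x)
  have hρ0 : ρ ≠ 0 := fun h => hρ (h ▸ L.zero_mem)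
  have hp0 : p ≠ 0 := fun h => heρ (by rw [hep, h, mul_zero])
  have hshift : HasProd (fun l : {l : K // l ∈ L ∧ l ≠ 0} => 1 - x / (ρ - l)) (p' / p) := by
    refine (hp'.div₀ hp hp0).congr_fun fun l => ?_
    have hl : (l : K) ≠ 0 := l.2.2
    have hlρ : (l : K) - ρ ≠ 0 := sub_ne_zero.2 fun h => hρ (h ▸ l.2.1)
    have hρl : ρ - l ≠ 0 := by rwa [← neg_sub, neg_ne_zero]
    rw [one_sub_div hl, one_sub_div hl, div_div_div_cancel_right₀ hl, one_sub_div hρl,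
      div_eq_div_iff hρl hlρ]
    ring
  let C : Set K := {μ | μ - ρ ∈ L}
  let reflect : {l : K // l ∈ L ∧ l ≠ 0} ≃ ↥(C \ {ρ}) :=
    (Equiv.subLeft ρ).subtypeEquiv fun l => by simp [C, L.neg_mem_iff]
  have hρρ : HasProd ((fun μ => 1 - x / μ) ∘ (↑) : ({ρ} : Set K) → K) (1 - x / ρ) :=
    hasProd_singleton ρ fun μ : K => 1 - x / μ
  have hsplit := hρρ.mul_disjoint Set.disjoint_sdiff_right (reflect.hasProd_iff.1 hshift)
  rw [Set.union_sdiff_cancel (Set.singleton_subset_iff.2 (by simp [C]))] at hsplit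
  have hval : e (ρ - x) / e ρ = (1 - x / ρ) * (p' / p) := by
    rw [hep, hep', one_sub_div hρ0]
    field_simp
  exact hval ▸ hsplit

section Cosets

variable {A K : Type*} [CommRing A] [Field K] [Algebra A K] {L : Submodule A K} {a : A}
  {R : Finset K}

theorem setOf_smul_mem_eq_union (hR1 : ∀ ρ ∈ R, a • ρ ∈ L ∧ ρ ∉ L)
    (hR2 : ∀ x : K, a • x ∈ L → x ∉ L → ∃! ρ, ρ ∈ R ∧ x - ρ ∈ L) :
    {μ : K | a • μ ∈ L ∧ μ ≠ 0} = {μ | μ ∈ L ∧ μ ≠ 0} ∪ ⋃ ρ ∈ R, {μ | μ - ρ ∈ L} := by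
  ext μ
  simp only [Set.mem_ofPred_eq, Set.mem_union, Set.mem_iUnion, exists_prop]
  constructor
  · rintro ⟨haμ, hμ0⟩
    by_cases hμ : μ ∈ L
    · exact Or.inl ⟨hμ, hμ0⟩
    · obtain ⟨ρ, ⟨hρ, hμρ⟩, -⟩ := hR2 μ haμ hμ
      exact Or.inr ⟨ρ, hρ, hμρ⟩
  · rintro (⟨hμ, hμ0⟩ | ⟨ρ, hρ, hμρ⟩)
    · exact ⟨L.smul_mem a hμ, hμ0⟩
    · refine ⟨by simpa [smul_sub] using L.add_mem (L.smul_mem a hμρ) (hR1 ρ hρ).1, ?_⟩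
      rintro rfl
      exact (hR1 ρ hρ).2 (by simpa using L.neg_mem hμρ)

theorem disjoint_setOf_mem_iUnion_coset (hR1 : ∀ ρ ∈ R, a • ρ ∈ L ∧ ρ ∉ L) :
    Disjoint {μ : K | μ ∈ L ∧ μ ≠ 0} (⋃ ρ ∈ R, {μ | μ - ρ ∈ L}) := by
  simp only [Set.disjoint_left, Set.mem_ofPred_eq, Set.mem_iUnion, not_exists]
  intro μ hμ ρ hρ hμρ
  exact (hR1 ρ hρ).2 (by simpa using L.sub_mem hμ.1 hμρ)

theorem pairwise_disjoint_coset (hR1 : ∀ ρ ∈ R, a • ρ ∈ L ∧ ρ ∉ L)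
    (hR2 : ∀ x : K, a • x ∈ L → x ∉ L → ∃! ρ, ρ ∈ R ∧ x - ρ ∈ L) :
    (R : Set K).PairwiseDisjoint fun ρ => {μ : K | μ - ρ ∈ L} := by
  intro ρ hρ ρ' hρ' hne
  simp only [Function.onFun, Set.disjoint_left, Set.mem_ofPred_eq]
  intro μ hμρ hμρ'
  obtain ⟨_, -, huniq⟩ := hR2 ρ (hR1 ρ hρ).1 (hR1 ρ hρ).2
  refine hne ((huniq ρ ⟨hρ, by simp⟩).trans (huniq ρ' ⟨hρ', ?_⟩).symm)
  simpa using L.sub_mem hμρ' hμρ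

end Cosets

theorem IsLatticeExp.map_smul {A K : Type*} [CommRing A] [NormedField K] [IsUltrametricDist K]
    [Algebra A K] {L : Submodule A K} (hdisc : ∀ ρ : ℝ, {x : K | x ∈ L ∧ ‖x‖ ≤ ρ}.Finite)
    {e : K → K} (he : IsLatticeExp (L : Set K) e) (hzero : ∀ x, e x = 0 → x ∈ L) {a : A}
    {R : Finset K} (hR1 : ∀ ρ ∈ R, a • ρ ∈ L ∧ ρ ∉ L)
    (hR2 : ∀ x : K, a • x ∈ L → x ∉ L → ∃! ρ, ρ ∈ R ∧ x - ρ ∈ L) (x : K) :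
    e (a • x) = algebraMap A K a * e x * ∏ ρ ∈ R, (1 - e x / e ρ) := by
  by_cases ha : algebraMap A K a = 0
  · simp [Algebra.smul_def, ha, he.map_zero]
  obtain ⟨p, hp, hep⟩ := he x
  obtain ⟨q, hq, heq⟩ := he (a • x)
  set f : K → K := fun μ => 1 - x / μ
  have hcosets : HasProd (f ∘ (↑) : ↥(⋃ ρ ∈ R, {μ : K | μ - ρ ∈ L}) → K)
      (∏ ρ ∈ R, e (ρ - x) / e ρ) :=
    hasProd_prod_disjoint R (pairwise_disjoint_coset hR1 hR2) fun ρ hρ =>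
      IsLatticeExp.hasProd_coset (L := L.toAddSubgroup) he (hR1 ρ hρ).2
        (fun h => (hR1 ρ hρ).2 (hzero ρ h)) x
  have hsplit : HasProd
      (f ∘ (↑) : ↥({μ : K | μ ∈ L ∧ μ ≠ 0} ∪ ⋃ ρ ∈ R, {μ : K | μ - ρ ∈ L}) → K)
      (p * ∏ ρ ∈ R, e (ρ - x) / e ρ) :=
    HasProd.mul_disjoint (f := f) (disjoint_setOf_mem_iUnion_coset hR1) hp hcosets
  rw [← setOf_smul_mem_eq_union hR1 hR2] at hsplit
  have hq' := (hasProd_one_sub_div_of_smul_mem ha hq).unique hsplit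
  have hsub : ∀ ρ, e (ρ - x) = e ρ - e x := fun ρ =>
    (AddMonoidHom.mk' e (IsLatticeExp.map_add (L := L.toAddSubgroup) hdisc he)).map_sub ρ x
  calc e (a • x) = algebraMap A K a * (x * p) * ∏ ρ ∈ R, e (ρ - x) / e ρ := by
        rw [heq, hq', Algebra.smul_def, mul_assoc, mul_assoc, mul_assoc]
    _ = algebraMap A K a * e x * ∏ ρ ∈ R, (1 - e x / e ρ) := by
        rw [← hep]
        refine congrArg _ (Finset.prod_congr rfl fun ρ hρ => ?_)
        have heρ : e ρ ≠ 0 := fun h => (hR1 ρ hρ).2 (hzero ρ h)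
        rw [hsub, sub_div, div_self heρ]

theorem stmt7_general (Fq K : Type*) [Field Fq]
    [NormedField K] [IsUltrametricDist K]
    [Algebra (Polynomial Fq) K]
    (L : Submodule (Polynomial Fq) K)
    (hdisc : ∀ ρ : ℝ, {x : K | x ∈ L ∧ ‖x‖ ≤ ρ}.Finite)
    (eL : K → K) (heL : IsLatticeExp (L : Set K) eL)
    (hzero : ∀ x : K, eL x = 0 ↔ x ∈ L)
    (a : Polynomial Fq)
    (R : Finset K)
    (hR1 : ∀ ρ ∈ R, a • ρ ∈ L ∧ ρ ∉ L)
    (hR2 : ∀ x : K, a • x ∈ L → x ∉ L → ∃! ρ, ρ ∈ R ∧ x - ρ ∈ L) :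
    ∀ x : K,
      eL (a • x) = Polynomial.eval (eL x)
        (Polynomial.C (algebraMap (Polynomial Fq) K a) * Polynomial.X *
          ∏ ρ ∈ R, (1 - Polynomial.C (eL ρ)⁻¹ * Polynomial.X)) := by
  intro x
  rw [heL.map_smul hdisc (fun y => (hzero y).1) hR1 hR2 x]
  simp only [Polynomial.eval_mul, Polynomial.eval_C, Polynomial.eval_X, Polynomial.eval_prod,
    Polynomial.eval_sub, Polynomial.eval_one, inv_mul_eq_div]

/-- If `L ⊂ ℂ_∞` is a discrete free `A`-module of rank `r` (`A = 𝔽_q[t]`) and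
`a ∈ A` is nonzero, then `φ_a(Z) = a·Z·∏'_{λ ∈ a⁻¹L/L}(1 - Z/e_L(λ))` is a
polynomial satisfying the functional equation `e_L(a·x) = φ_a(e_L(x))` for all `x`.
Here `R` is a set of representatives of the nonzero cosets of `a⁻¹L/L`. -/
theorem stmt7 (Fq K : Type*) [Field Fq] [Fintype Fq] (q : ℕ) (hq : q = Fintype.card Fq)
    [NormedField K] [IsUltrametricDist K] [CompleteSpace K]
    [Algebra (Polynomial Fq) K]
    (L : Submodule (Polynomial Fq) K) (r : ℕ) (hr : 1 ≤ r)
    (hfree : Nonempty (L ≃ₗ[Polynomial Fq] (Fin r → Polynomial Fq)))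
    (hdisc : ∀ ρ : ℝ, {x : K | x ∈ L ∧ ‖x‖ ≤ ρ}.Finite)
    (eL : K → K) (heL : IsLatticeExp (L : Set K) eL)
    (hzero : ∀ x : K, eL x = 0 ↔ x ∈ L)
    (a : Polynomial Fq) (ha : a ≠ 0)
    (R : Finset K)
    (hR1 : ∀ ρ ∈ R, a • ρ ∈ L ∧ ρ ∉ L)
    (hR2 : ∀ x : K, a • x ∈ L → x ∉ L → ∃! ρ, ρ ∈ R ∧ x - ρ ∈ L) :
    ∀ x : K,
      eL (a • x) = Polynomial.eval (eL x)
        (Polynomial.C (algebraMap (Polynomial Fq) K a) * Polynomial.X *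
          ∏ ρ ∈ R, (1 - Polynomial.C (eL ρ)⁻¹ * Polynomial.X)) :=
  stmt7_general Fq K L hdisc eL heL hzero a R hR1 hR2
end
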